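/- arXiv:math/0610051 — 6 statements merged into one kernel-verified Lean document; each statement's English description precedes it below -/
import Mathlib

section
/- Let A > 0 and ε > 0. If r is a positive integer with r ≥ max(2eA, log₂(2ε⁻¹)), then for all x ∈ [−A, A] and y ∈ [−1, 1] one has |e^{ixy} − Σ_{n=0}^{r−1} (iⁿ/n!) xⁿ yⁿ| ≤ ε. In particular, the ε-separation rank of e^{ixy} on [−A,A] × [−1,1] is at most 1 + max(2eA, log₂(2ε⁻¹)). -/
/-!
The error of the degree `r - 1` Taylor polynomial of `exp` at `z` is at most `2 ‖z‖ ^ r / r!` as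
soon as `2 ‖z‖ ≤ r + 1`. Since `r ^ r ≤ e ^ r r!`, the condition `2 e ‖z‖ ≤ r` makes
`‖z‖ ^ r / r! ≤ 2 ^ (-r)`, and `r ≥ log₂ (2 / ε)` makes `2 ^ (1 - r) ≤ ε`. With `z = i x y` the
Taylor polynomial is a sum of `r` separated terms `(iⁿ xⁿ / n!) yⁿ`.
-/

open scoped BigOperators Nat

lemma pow_div_factorial_le_inv_two_pow {a : ℝ} {n : ℕ} (ha : 0 ≤ a)
    (hn : 2 * Real.exp 1 * a ≤ n) : a ^ n / n ! ≤ (2 ^ n)⁻¹ := by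
  have he : 0 < Real.exp 1 := Real.exp_pos 1
  have ha' : a ≤ n / (2 * Real.exp 1) := by rw [le_div_iff₀ (by positivity)]; linarith
  have hpow_le_exp : (n : ℝ) ^ n / n ! ≤ Real.exp 1 ^ n := by
    simpa [← Real.exp_nat_mul] using Real.pow_div_factorial_le_exp _ (Nat.cast_nonneg n) n
  calc a ^ n / n ! ≤ (n / (2 * Real.exp 1)) ^ n / n ! := by gcongr
    _ = ((n : ℝ) ^ n / n !) / (2 ^ n * Real.exp 1 ^ n) := by rw [div_pow, mul_pow]; ring
    _ ≤ Real.exp 1 ^ n / (2 ^ n * Real.exp 1 ^ n) := by gcongr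
    _ = (2 ^ n)⁻¹ := by field_simp

lemma Complex.norm_exp_sub_sum_range_le_two_mul_inv_two_pow {z : ℂ} {n : ℕ}
    (hn : 2 * Real.exp 1 * ‖z‖ ≤ n) :
    ‖exp z - ∑ m ∈ Finset.range n, z ^ m / (m ! : ℂ)‖ ≤ 2 * (2 ^ n)⁻¹ := by
  have hsmall : ‖z‖ / n.succ ≤ 1 / 2 := by
    have : 2 * ‖z‖ ≤ 2 * Real.exp 1 * ‖z‖ := by
      nlinarith [Real.add_one_le_exp 1, norm_nonneg z]
    rw [div_le_iff₀ (by positivity)]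
    push_cast
    linarith
  calc ‖exp z - ∑ m ∈ Finset.range n, z ^ m / (m ! : ℂ)‖ ≤ ‖z‖ ^ n / n ! * 2 := exp_bound' hsmall
    _ ≤ (2 ^ n)⁻¹ * 2 := by gcongr; exact pow_div_factorial_le_inv_two_pow (norm_nonneg z) hn
    _ = 2 * (2 ^ n)⁻¹ := mul_comm _ _

lemma two_mul_inv_two_pow_le {ε : ℝ} (hε : 0 < ε) {n : ℕ} (hn : Real.logb 2 (2 / ε) ≤ n) :
    2 * (2 ^ n)⁻¹ ≤ ε := by
  have h : 2 / ε ≤ 2 ^ n := by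
    simpa using (Real.logb_le_iff_le_rpow (by norm_num) (by positivity)).1 hn
  rw [div_le_iff₀ hε] at h
  rw [← div_eq_mul_inv, div_le_iff₀ (by positivity)]
  linarith

lemma norm_cexp_I_mul_mul_sub_sum_range_le {A ε x y : ℝ} (hε : 0 < ε) {r : ℕ}
    (hr : max (2 * Real.exp 1 * A) (Real.logb 2 (2 / ε)) ≤ r) (hx : |x| ≤ A) (hy : |y| ≤ 1) :
    ‖Complex.exp (Complex.I * x * y) -
      ∑ n ∈ Finset.range r, Complex.I ^ n / (n ! : ℂ) * (x : ℂ) ^ n * (y : ℂ) ^ n‖ ≤ ε := by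
  have hz : ‖Complex.I * x * y‖ ≤ A := by
    simp only [norm_mul, Complex.norm_I, one_mul, Complex.norm_real, Real.norm_eq_abs]
    nlinarith [abs_nonneg x, abs_nonneg y]
  have hsum : ∑ n ∈ Finset.range r, Complex.I ^ n / (n ! : ℂ) * (x : ℂ) ^ n * (y : ℂ) ^ n
      = ∑ n ∈ Finset.range r, (Complex.I * x * y) ^ n / n ! :=
    Finset.sum_congr rfl fun n _ => by ring
  rw [hsum]
  refine le_trans (Complex.norm_exp_sub_sum_range_le_two_mul_inv_two_pow ?_)
    (two_mul_inv_two_pow_le hε (le_of_max_le_right hr))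
  nlinarith [le_of_max_le_left hr, Real.exp_pos 1]

theorem stmt_0 (A ε : ℝ) (hA : 0 < A) (hε : 0 < ε) :
    (∀ r : ℕ, 0 < r →
      max (2 * Real.exp 1 * A) (Real.logb 2 (2 / ε)) ≤ (r : ℝ) →
      ∀ x ∈ Set.Icc (-A) A, ∀ y ∈ Set.Icc (-1 : ℝ) 1,
        ‖Complex.exp (Complex.I * (x : ℂ) * (y : ℂ)) -
          ∑ n ∈ Finset.range r,
            Complex.I ^ n / (n.factorial : ℂ) * (x : ℂ) ^ n * (y : ℂ) ^ n‖ ≤ ε) ∧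
    (∃ r : ℕ, (r : ℝ) ≤ 1 + max (2 * Real.exp 1 * A) (Real.logb 2 (2 / ε)) ∧
      ∃ (c : Fin r → ℝ → ℂ) (d : Fin r → ℝ → ℂ),
        ∀ x ∈ Set.Icc (-A) A, ∀ y ∈ Set.Icc (-1 : ℝ) 1,
          ‖Complex.exp (Complex.I * (x : ℂ) * (y : ℂ)) -
            ∑ n, c n x * d n y‖ ≤ ε) := by
  refine ⟨fun r _ hr x hx y hy =>
    norm_cexp_I_mul_mul_sub_sum_range_le hε hr (abs_le.2 hx) (abs_le.2 hy), ?_⟩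
  set M := max (2 * Real.exp 1 * A) (Real.logb 2 (2 / ε))
  have hM : 0 ≤ M := le_max_of_le_left (by positivity)
  refine ⟨⌊M⌋₊ + 1, ?_, fun n x => Complex.I ^ (n : ℕ) / ((n : ℕ)! : ℂ) * (x : ℂ) ^ (n : ℕ),
    fun n y => (y : ℂ) ^ (n : ℕ), fun x hx y hy => ?_⟩
  · push_cast
    linarith [Nat.floor_le hM]
  · rw [Fin.sum_univ_eq_sum_range
      (fun n => Complex.I ^ n / (n ! : ℂ) * (x : ℂ) ^ n * (y : ℂ) ^ n)]
    exact norm_cexp_I_mul_mul_sub_sum_range_le hε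
      (by push_cast; exact (Nat.lt_floor_add_one M).le) (abs_le.2 hx) (abs_le.2 hy)
end

section
/- Let A > 0 with A ≤ 1/(2e) and let ε > 0 with ε ≤ 2. If r is a positive integer with r ≥ log(2ε⁻¹)/log(1/(eA)), then for all x ∈ [−A, A] and y ∈ [−1, 1] one has |e^{ixy} − Σ_{n=0}^{r−1} (iⁿ/n!) xⁿ yⁿ| ≤ ε. In particular, the ε-separation rank of e^{ixy} on [−A,A] × [−1,1] is at most 1 + log(2ε⁻¹)/log(1/(eA)). -/
/-!
Each Taylor term `(iⁿ/n!) xⁿ · yⁿ` of `e^{ixy}` is a product of a function of `x` and one of `y`,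
so truncating the series after `r` terms gives a separated approximation of rank `r`.
Since `|z| ≤ A ≤ 1/2`, the tail is at most twice its first term, `2 A^r / r! ≤ 2 A^r ≤ 2 (eA)^r`,
and the hypothesis on `r` is exactly `(eA)^r ≤ ε/2` after taking logarithms.
-/

open Finset

lemma Complex.norm_exp_sub_sum_range_le_two_mul_pow {z : ℂ} {a : ℝ} (hz : ‖z‖ ≤ a)
    (ha : a ≤ 1 / 2) (r : ℕ) :
    ‖Complex.exp z - ∑ n ∈ range r, z ^ n / (n.factorial : ℂ)‖ ≤ 2 * a ^ r := by
  have hratio : ‖z‖ / r.succ ≤ 1 / 2 :=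
    (div_le_self (norm_nonneg z) (by exact_mod_cast r.succ_pos)).trans (hz.trans ha)
  calc ‖Complex.exp z - ∑ n ∈ range r, z ^ n / (n.factorial : ℂ)‖
      ≤ ‖z‖ ^ r / r.factorial * 2 := Complex.exp_bound' hratio
    _ ≤ a ^ r / 1 * 2 := by
        have ha₀ : 0 ≤ a := (norm_nonneg z).trans hz
        gcongr
        exact Nat.one_le_cast.mpr r.factorial_pos
    _ = 2 * a ^ r := by ring

lemma pow_le_of_log_one_div_div_log_one_div_le {q δ : ℝ} (hq₀ : 0 < q) (hq₁ : q < 1)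
    (hδ : 0 < δ) {r : ℕ} (hr : Real.log (1 / δ) / Real.log (1 / q) ≤ r) : q ^ r ≤ δ := by
  have hlog_q : 0 < Real.log (1 / q) := Real.log_pos (by rw [lt_one_div one_pos hq₀]; simpa)
  rw [div_le_iff₀ hlog_q, one_div, one_div, Real.log_inv, Real.log_inv] at hr
  rw [← Real.log_le_log_iff (pow_pos hq₀ r) hδ, Real.log_pow]
  linarith

theorem stmt_1 (A ε : ℝ) (hA : 0 < A) (hA2 : A ≤ 1 / (2 * Real.exp 1))
    (hε : 0 < ε) (hε2 : ε ≤ 2) :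
    (∀ r : ℕ, 0 < r →
      Real.log (2 / ε) / Real.log (1 / (Real.exp 1 * A)) ≤ (r : ℝ) →
      ∀ x ∈ Set.Icc (-A) A, ∀ y ∈ Set.Icc (-1 : ℝ) 1,
        ‖(Complex.exp (Complex.I * (x : ℂ) * (y : ℂ)) -
          ∑ n ∈ Finset.range r,
            Complex.I ^ n / (n.factorial : ℂ) * (x : ℂ) ^ n * (y : ℂ) ^ n)‖ ≤ ε) ∧
    (∃ r : ℕ, (r : ℝ) ≤ 1 + Real.log (2 / ε) / Real.log (1 / (Real.exp 1 * A)) ∧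
      ∃ (c : Fin r → ℝ → ℂ) (d : Fin r → ℝ → ℂ),
        ∀ x ∈ Set.Icc (-A) A, ∀ y ∈ Set.Icc (-1 : ℝ) 1,
          ‖(Complex.exp (Complex.I * (x : ℂ) * (y : ℂ)) -
            ∑ n, c n x * d n y)‖ ≤ ε) := by
  set L := Real.log (2 / ε) / Real.log (1 / (Real.exp 1 * A))
  have he : 1 ≤ Real.exp 1 := Real.one_le_exp zero_le_one
  have hA_le_eA : A ≤ Real.exp 1 * A := le_mul_of_one_le_left hA.le he
  have heA_le : Real.exp 1 * A ≤ 1 / 2 := by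
    rw [le_div_iff₀ (by positivity : (0 : ℝ) < 2 * Real.exp 1)] at hA2
    linarith
  have taylor : ∀ r : ℕ, L ≤ r → ∀ x ∈ Set.Icc (-A) A, ∀ y ∈ Set.Icc (-1 : ℝ) 1,
      ‖Complex.exp (Complex.I * x * y) - ∑ n ∈ range r,
        Complex.I ^ n / (n.factorial : ℂ) * (x : ℂ) ^ n * (y : ℂ) ^ n‖ ≤ ε := by
    intro r hr x hx y hy
    have hz : ‖Complex.I * x * y‖ ≤ A := by
      simpa using mul_le_mul (abs_le.2 hx) (abs_le.2 hy) (abs_nonneg y) hA.le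
    have hpow : (Real.exp 1 * A) ^ r ≤ ε / 2 :=
      pow_le_of_log_one_div_div_log_one_div_le (by positivity) (by linarith) (by positivity)
        (by rwa [one_div_div])
    have hsum : ∑ n ∈ range r, Complex.I ^ n / (n.factorial : ℂ) * (x : ℂ) ^ n * (y : ℂ) ^ n
        = ∑ n ∈ range r, (Complex.I * x * y) ^ n / (n.factorial : ℂ) :=
      sum_congr rfl fun n _ => by ring
    calc _ = ‖Complex.exp (Complex.I * x * y)
              - ∑ n ∈ range r, (Complex.I * x * y) ^ n / (n.factorial : ℂ)‖ := by rw [hsum]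
      _ ≤ 2 * A ^ r :=
          Complex.norm_exp_sub_sum_range_le_two_mul_pow hz (hA_le_eA.trans heA_le) r
      _ ≤ 2 * (Real.exp 1 * A) ^ r := by gcongr
      _ ≤ ε := by linarith
  have hL : 0 ≤ L :=
    div_nonneg (Real.log_nonneg (by rw [le_div_iff₀ hε]; linarith))
      (Real.log_nonneg (by rw [le_div_iff₀ (by positivity)]; linarith))
  refine ⟨fun r _ => taylor r, ⌊L⌋₊ + 1, by push_cast; linarith [Nat.floor_le hL],
    fun n x => Complex.I ^ (n : ℕ) / ((n : ℕ).factorial : ℂ) * (x : ℂ) ^ (n : ℕ),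
    fun n y => (y : ℂ) ^ (n : ℕ), fun x hx y hy => ?_⟩
  rw [Fin.sum_univ_eq_sum_range
    (fun n => Complex.I ^ n / (n.factorial : ℂ) * (x : ℂ) ^ n * (y : ℂ) ^ n)]
  exact taylor _ (by exact_mod_cast (Nat.lt_floor_add_one L).le) x hx y hy
end

section
/- Let a : ℝ² × ℝ² → ℂ be infinitely differentiable, vanishing for x outside a compact set, and assume that for every pair of multi-indices (α, β) there is a constant C_{αβ} > 0 with |∂_ξ^α ∂_x^β a(x,ξ)| ≤ C_{αβ} (1 + |ξ|²)^{−|α|/2} for all (x,ξ). Then for every M > 0 there exists C_M > 0 such that for every ε > 0, the ε-separation rank of a(x,ξ) (separating the variable x from the variable ξ) is at most C_M ε^{−1/M}. -/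
open scoped BigOperators
noncomputable section

local notation "E2" => EuclideanSpace ℝ (Fin 2)

lemma sep_iteratedDeriv_line (f : E2 → ℂ) (hf : ContDiff ℝ (⊤ : ℕ∞) f) (x₀ v : E2) (k : ℕ) :
    ∀ t : ℝ, iteratedDeriv k (fun t : ℝ => f (x₀ + t • v)) t
      = iteratedFDeriv ℝ k f (x₀ + t • v) (fun _ => v) := by
  induction k with
  | zero => intro t; simp [iteratedDeriv_zero, iteratedFDeriv_zero_apply]
  | succ k IH =>
    intro t
    rw [iteratedDeriv_succ]
    have hγ : HasDerivAt (fun t : ℝ => x₀ + t • v) v t :=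
      by simpa using ((hasDerivAt_id t).smul_const v).const_add x₀
    have hdiff : Differentiable ℝ (iteratedFDeriv ℝ k f) :=
      hf.differentiable_iteratedFDeriv (by exact_mod_cast lt_top_iff_ne_top.mpr (by simp))
    have h1 : HasFDerivAt (iteratedFDeriv ℝ k f)
        (fderiv ℝ (iteratedFDeriv ℝ k f) (x₀ + t • v)) (x₀ + t • v) :=
      (hdiff _).hasFDerivAt
    have h2 : HasDerivAt (fun s : ℝ => iteratedFDeriv ℝ k f (x₀ + s • v))
        (fderiv ℝ (iteratedFDeriv ℝ k f) (x₀ + t • v) v) t :=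
      h1.comp_hasDerivAt t hγ
    have h3 : HasDerivAt (fun s : ℝ => iteratedFDeriv ℝ k f (x₀ + s • v) (fun _ => v))
        (fderiv ℝ (iteratedFDeriv ℝ k f) (x₀ + t • v) v (fun _ => v)) t :=
      ((ContinuousMultilinearMap.apply ℝ (fun _ : Fin k => E2) ℂ
        (fun _ => v)).hasFDerivAt.comp_hasDerivAt t h2)
    have : iteratedDeriv k (fun t : ℝ => f (x₀ + t • v))
        = fun s : ℝ => iteratedFDeriv ℝ k f (x₀ + s • v) (fun _ => v) := funext IH
    rw [this, h3.deriv, iteratedFDeriv_succ_apply_left]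
    congr 1

lemma sep_taylor (f : E2 → ℂ) (hf : ContDiff ℝ (⊤ : ℕ∞) f) (s : ℕ) (D : ℝ)
    (hD : ∀ y, ‖iteratedFDeriv ℝ (s+1) f y‖ ≤ D) (x₀ x : E2) :
    ‖f x - ∑ k ∈ Finset.range (s+1), ((k.factorial : ℝ)⁻¹) •
        iteratedFDeriv ℝ k f x₀ (fun _ => x - x₀)‖ ≤ D * ‖x - x₀‖ ^ (s+1) := by
  set v := x - x₀ with hv
  have hD0 : 0 ≤ D := le_trans (norm_nonneg _) (hD x₀)
  set g : ℝ → ℂ := fun t => f (x₀ + t • v) with hg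
  have hgc : ContDiff ℝ (⊤ : ℕ∞) g :=
    hf.comp (contDiff_const.add (contDiff_id.smul contDiff_const))
  have hw : ∀ k : ℕ, ∀ t ∈ Set.Icc (0:ℝ) 1,
      iteratedDerivWithin k g (Set.Icc 0 1) t
        = iteratedFDeriv ℝ k f (x₀ + t • v) (fun _ => v) := by
    intro k t ht
    have h1 : ftaylorSeries ℝ g t k = iteratedFDerivWithin ℝ k g (Set.Icc 0 1) t :=
      (((contDiff_iff_ftaylorSeries (n := (k:ℕ∞))).mp
        (hgc.of_le (by exact_mod_cast le_top))).hasFTaylorSeriesUpToOn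
        (Set.Icc 0 1)).eq_iteratedFDerivWithin_of_uniqueDiffOn le_rfl
        (uniqueDiffOn_Icc one_pos) ht
    have h2 : iteratedFDerivWithin ℝ k g (Set.Icc 0 1) t = iteratedFDeriv ℝ k g t := by
      rw [← h1]; rfl
    rw [iteratedDerivWithin_eq_iteratedFDerivWithin, h2, ← iteratedDeriv_eq_iteratedFDeriv]
    exact sep_iteratedDeriv_line f hf x₀ v k t
  have hcd : ContDiffOn ℝ (s+1) g (Set.Icc 0 1) := (hgc.of_le (by exact_mod_cast le_top)).contDiffOn
  have hbound : ∀ y ∈ Set.Icc (0:ℝ) 1,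
      ‖iteratedDerivWithin (s+1) g (Set.Icc 0 1) y‖ ≤ D * ‖v‖ ^ (s+1) := by
    intro y hy
    rw [hw (s+1) y hy]
    calc ‖iteratedFDeriv ℝ (s+1) f (x₀ + y • v) (fun _ => v)‖
        ≤ ‖iteratedFDeriv ℝ (s+1) f (x₀ + y • v)‖ * ∏ _i : Fin (s+1), ‖v‖ :=
          ContinuousMultilinearMap.le_opNorm _ _
      _ ≤ D * ‖v‖ ^ (s+1) := by
          rw [Finset.prod_const, Finset.card_univ, Fintype.card_fin]
          exact mul_le_mul_of_nonneg_right (hD _) (pow_nonneg (norm_nonneg _) _)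
  have H := taylor_mean_remainder_bound (f := g) (a := 0) (b := 1) (x := 1) (n := s)
      zero_le_one hcd (Set.right_mem_Icc.mpr zero_le_one) hbound
  have hT : taylorWithinEval g s (Set.Icc 0 1) 0 1
      = ∑ k ∈ Finset.range (s+1), ((k.factorial:ℝ)⁻¹) •
          iteratedFDeriv ℝ k f x₀ (fun _ => v) := by
    rw [taylor_within_apply]
    refine Finset.sum_congr rfl fun k _ => ?_
    rw [iteratedDerivWithin_eq_iteratedFDerivWithin,
        ← iteratedDerivWithin_eq_iteratedFDerivWithin,
        hw k 0 (Set.left_mem_Icc.mpr zero_le_one)]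
    norm_num
  have hg1 : g 1 = f x := by simp [hg, hv]
  rw [hg1, hT] at H
  calc ‖f x - ∑ k ∈ Finset.range (s+1), ((k.factorial:ℝ)⁻¹) •
        iteratedFDeriv ℝ k f x₀ (fun _ => v)‖
      ≤ D * ‖v‖ ^ (s+1) * (1 - 0) ^ (s+1) / s.factorial := H
    _ ≤ D * ‖v‖ ^ (s+1) := by
        rw [sub_zero, one_pow, mul_one]
        exact div_le_self (mul_nonneg hD0 (pow_nonneg (norm_nonneg _) _))
          (by exact_mod_cast s.factorial_pos)

lemma sep_basis_sum (v : E2) :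
    v = ∑ j : Fin 2, v j • EuclideanSpace.single j (1:ℝ) := by
  ext c
  simp [EuclideanSpace.single_apply, Finset.sum_apply, mul_comm]
  fin_cases c <;> simp

lemma sep_expand (k : ℕ) (A : ContinuousMultilinearMap ℝ (fun _ : Fin k => E2) ℂ) (v : E2) :
    A (fun _ => v) = ∑ m : Fin k → Fin 2,
      (∏ i, v (m i)) • A (fun i => EuclideanSpace.single (m i) (1:ℝ)) := by
  have hv : (fun _ : Fin k => v)
      = fun _ : Fin k => ∑ j : Fin 2, v j • EuclideanSpace.single j (1:ℝ) := by
    funext _; exact sep_basis_sum v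
  rw [hv, A.map_sum]
  refine Finset.sum_congr rfl fun m _ => ?_
  rw [← A.map_smul_univ]

def sep_mk2 (u : Fin 2 → ℝ) : EuclideanSpace ℝ (Fin 2) := (WithLp.equiv 2 _).symm u

lemma sep_mk2_apply (u : Fin 2 → ℝ) (c : Fin 2) : sep_mk2 u c = u c := rfl

lemma sep_grid1 (R : ℝ) (hR : 1 ≤ R) (N : ℕ) (hN : 1 ≤ N) (u : ℝ) (hu : |u| ≤ R) :
    ∃ i : Fin (N+1), |u - (-R + (2*R/N) * (i:ℝ))| ≤ 2*R/N := by
  have hR0 : (0:ℝ) < R := lt_of_lt_of_le one_pos hR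
  have hN0 : (0:ℝ) < N := by exact_mod_cast hN
  set t : ℝ := (u + R) * N / (2*R) with ht
  have ht0 : 0 ≤ t := by
    apply div_nonneg (mul_nonneg ?_ hN0.le) (by linarith)
    have := abs_le.mp hu; linarith
  have htN : t ≤ N := by
    rw [ht, div_le_iff₀ (by linarith)]
    have := (abs_le.mp hu).2
    nlinarith
  have hiN : ⌊t⌋₊ ≤ N := by
    calc ⌊t⌋₊ ≤ ⌊(N:ℝ)⌋₊ := Nat.floor_le_floor htN
    _ = N := Nat.floor_natCast N
  refine ⟨⟨⌊t⌋₊, Nat.lt_succ_of_le hiN⟩, ?_⟩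
  have hu_eq : u = -R + (2*R/N) * t := by
    rw [ht]
    field_simp
    ring
  have h1 : (⌊t⌋₊ : ℝ) ≤ t := Nat.floor_le ht0
  have h2 : t < ⌊t⌋₊ + 1 := Nat.lt_floor_add_one t
  have hcoef : 0 < 2*R/N := by positivity
  rw [hu_eq]
  rw [abs_le]
  constructor <;> simp only [Fin.val_mk] <;> nlinarith [mul_le_mul_of_nonneg_left h1 hcoef.le,
    mul_le_mul_of_nonneg_left h2.le hcoef.le]

lemma sep_grid (R : ℝ) (hR : 1 ≤ R) (N : ℕ) (hN : 1 ≤ N) (x : EuclideanSpace ℝ (Fin 2))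
    (hx : ‖x‖ ≤ R) :
    ∃ σ : Fin 2 → Fin (N+1),
      ‖x - sep_mk2 (fun c => -R + (2*R/N) * ((σ c : ℕ) : ℝ))‖ ≤ 3*R/N := by
  have hR0 : (0:ℝ) < R := lt_of_lt_of_le one_pos hR
  have hN0 : (0:ℝ) < N := by exact_mod_cast hN
  have hcoord : ∀ c : Fin 2, |x c| ≤ R := by
    intro c
    refine le_trans ?_ hx
    rw [EuclideanSpace.norm_eq]
    have : |x c| = Real.sqrt (‖x c‖^2) := by
      rw [Real.sqrt_sq_eq_abs]; simp
    rw [this]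
    apply Real.sqrt_le_sqrt
    exact Finset.single_le_sum (f := fun i => ‖x i‖^2) (fun i _ => by positivity)
      (Finset.mem_univ c)
  choose σ hσ using fun c => sep_grid1 R hR N hN (x c) (hcoord c)
  refine ⟨σ, ?_⟩
  rw [EuclideanSpace.norm_eq]
  have hbound : ∀ c : Fin 2,
      ‖(x - sep_mk2 (fun c => -R + (2*R/N) * ((σ c : ℕ) : ℝ))) c‖^2 ≤ (2*R/N)^2 := by
    intro c
    have : (x - sep_mk2 (fun c => -R + (2*R/N) * ((σ c : ℕ) : ℝ))) c
        = x c - (-R + (2*R/N) * ((σ c : ℕ) : ℝ)) := rfl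
    rw [this]
    rw [Real.norm_eq_abs, sq_abs]
    have := hσ c
    nlinarith [abs_nonneg (x c - (-R + 2 * R / ↑N * ((σ c : ℕ) : ℝ))),
      sq_abs (x c - (-R + 2 * R / ↑N * ((σ c : ℕ) : ℝ)))]
  calc Real.sqrt (∑ c : Fin 2, ‖(x - sep_mk2 (fun c => -R + (2*R/N) * ((σ c : ℕ) : ℝ))) c‖^2)
      ≤ Real.sqrt ((3*R/N)^2) := by
        apply Real.sqrt_le_sqrt
        have h2 : (2:ℝ) * (2*R/N)^2 ≤ (3*R/N)^2 := by
          have hN2 : (0:ℝ) < (N:ℝ)^2 := by positivity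
          rw [div_pow, div_pow, ← mul_div_assoc, div_le_div_iff₀ hN2 hN2]
          nlinarith
        calc ∑ c : Fin 2, ‖(x - sep_mk2 (fun c => -R + (2*R/N) * ((σ c : ℕ) : ℝ))) c‖^2
            ≤ ∑ _c : Fin 2, (2*R/N)^2 := Finset.sum_le_sum (fun c _ => hbound c)
          _ = 2 * (2*R/N)^2 := by simp [two_mul]
          _ ≤ (3*R/N)^2 := h2
    _ = 3*R/N := Real.sqrt_sq (by positivity)

set_option maxHeartbeats 2000000 in
theorem stmt_4 (a : EuclideanSpace ℝ (Fin 2) → EuclideanSpace ℝ (Fin 2) → ℂ)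
    (hsmooth : ContDiff ℝ (⊤ : ℕ∞)
      (fun q : EuclideanSpace ℝ (Fin 2) × EuclideanSpace ℝ (Fin 2) => a q.1 q.2))
    (hsupp : ∃ K : Set (EuclideanSpace ℝ (Fin 2)), IsCompact K ∧
      ∀ x ∉ K, ∀ ξ, a x ξ = 0)
    (hsymbol : ∀ j k : ℕ, ∃ C > 0, ∀ x ξ : EuclideanSpace ℝ (Fin 2),
      ‖iteratedFDeriv ℝ k (fun ξ' => iteratedFDeriv ℝ j (fun x' => a x' ξ') x) ξ‖ ≤
        C * (1 + ‖ξ‖ ^ 2) ^ (-(k : ℝ) / 2)) :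
    ∀ M : ℝ, 0 < M → ∃ C > 0, ∀ ε : ℝ, 0 < ε →
      ∃ r : ℕ, (r : ℝ) ≤ C * ε ^ (-1 / M) ∧
        ∃ (c d : Fin r → EuclideanSpace ℝ (Fin 2) → ℂ),
          ∀ x ξ : EuclideanSpace ℝ (Fin 2),
            ‖a x ξ - ∑ n, c n x * d n ξ‖ ≤ ε := by
  classical
  obtain ⟨K, hKc, hK0⟩ := hsupp
  obtain ⟨R₀, hR₀⟩ := hKc.isBounded.subset_closedBall 0
  set R : ℝ := max R₀ 1 with hRdef
  have hR : 1 ≤ R := le_max_right _ _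
  have hR0 : 0 < R := lt_of_lt_of_le one_pos hR
  have hKR : ∀ x ∈ K, ‖x‖ ≤ R := by
    intro x hx
    have := hR₀ hx
    rw [Metric.mem_closedBall, dist_zero_right] at this
    exact this.trans (le_max_left _ _)
  -- slice smoothness
  have hslice : ∀ ξ, ContDiff ℝ (⊤ : ℕ∞) (fun x' => a x' ξ) := fun ξ =>
    hsmooth.comp (contDiff_id.prodMk contDiff_const)
  -- uniform bound on a
  obtain ⟨A₀, hA₀pos, hA₀⟩ := hsymbol 0 0
  have habs : ∀ x ξ, ‖a x ξ‖ ≤ A₀ := by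
    intro x ξ
    have := hA₀ x ξ
    simpa [norm_iteratedFDeriv_zero] using this
  intro M hM
  set s : ℕ := ⌈2*M⌉₊ with hsdef
  have hsM : 2*M ≤ (s:ℝ) + 1 := le_trans (Nat.le_ceil _) (by rw [hsdef]; linarith)
  -- derivative bound of order s+1
  obtain ⟨D, hDpos, hD⟩ := hsymbol (s+1) 0
  have hDer : ∀ ξ x, ‖iteratedFDeriv ℝ (s+1) (fun x' => a x' ξ) x‖ ≤ D := by
    intro ξ x
    have := hD x ξ
    simpa [norm_iteratedFDeriv_zero] using this
  set B : ℝ := max 1 (D * (3*R)^(s+1)) with hBdef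
  have hB1 : 1 ≤ B := le_max_left _ _
  set A' : ℝ := max 1 A₀ with hA'def
  have hA'1 : 1 ≤ A' := le_max_left _ _
  set C : ℝ := 2^(s+4) * (B ^ (1/M) + 2 * A' ^ (1/M)) with hCdef
  have hBM : 0 < B ^ (1/M) := Real.rpow_pos_of_pos (lt_of_lt_of_le one_pos hB1) _
  have hAM : 0 < A' ^ (1/M) := Real.rpow_pos_of_pos (lt_of_lt_of_le one_pos hA'1) _
  have hCpos : 0 < C := by positivity
  refine ⟨C, hCpos, ?_⟩
  intro ε hε
  by_cases hcase : A₀ ≤ ε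
  · -- rank zero
    refine ⟨0, ?_, fun _ _ => 0, fun _ _ => 0, ?_⟩
    · have : (0:ℝ) < C * ε ^ (-1/M) := by positivity
      simpa using this.le
    · intro x ξ
      simp only [Finset.univ_eq_empty, Finset.sum_empty, sub_zero]
      calc ‖a x ξ‖ = ‖a x ξ‖ := rfl
        _ ≤ A₀ := habs x ξ
        _ ≤ ε := hcase
  push_neg at hcase
  -- main case
  set y : ℝ := (B / ε) ^ (((s:ℝ)+1))⁻¹ with hydef
  have hy0 : 0 ≤ y := Real.rpow_nonneg (by positivity) _
  set N : ℕ := max 1 ⌈y⌉₊ with hNdef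
  have hN1 : 1 ≤ N := le_max_left _ _
  have hN0 : (0:ℝ) < N := by exact_mod_cast hN1
  have hNy : y ≤ N := by
    calc y ≤ ⌈y⌉₊ := Nat.le_ceil y
      _ ≤ N := by exact_mod_cast le_max_right 1 ⌈y⌉₊
  have hNle : (N:ℝ) ≤ y + 1 := by
    have h1 : (⌈y⌉₊:ℝ) ≤ y + 1 := (Nat.ceil_lt_add_one hy0).le
    have h2 : (1:ℝ) ≤ y + 1 := by linarith
    rw [hNdef]
    push_cast [Nat.cast_max]
    exact max_le h2 h1
  -- error of the mesh
  have hmesh : B / (N:ℝ)^(s+1) ≤ ε := by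
    rw [div_le_iff₀ (by positivity)]
    have hBe : (0:ℝ) ≤ B/ε := by positivity
    have hkey : B/ε = y ^ (s+1) := by
      rw [hydef, ← Real.rpow_natCast ((B/ε) ^ (((s:ℝ)+1))⁻¹) (s+1),
        ← Real.rpow_mul hBe]
      push_cast
      rw [inv_mul_cancel₀ (by positivity : (s:ℝ)+1 ≠ 0), Real.rpow_one]
    have : B / ε ≤ (N:ℝ)^(s+1) := by
      rw [hkey]
      exact pow_le_pow_left₀ hy0 hNy _
    calc B = (B/ε) * ε := by field_simp
      _ ≤ (N:ℝ)^(s+1) * ε := by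
          exact mul_le_mul_of_nonneg_right this hε.le
      _ = ε * (N:ℝ)^(s+1) := by ring
  -- grid points and cell choice
  set p : (Fin 2 → Fin (N+1)) → E2 :=
    fun σ => sep_mk2 (fun c => -R + (2*R/N) * ((σ c : ℕ) : ℝ)) with hpdef
  have hch : ∀ x ∈ K, ∃ σ, ‖x - p σ‖ ≤ 3*R/N := fun x hx =>
    sep_grid R hR N hN1 x (hKR x hx)
  set ch : E2 → (Fin 2 → Fin (N+1)) := fun x =>
    if h : ∃ σ, ‖x - p σ‖ ≤ 3*R/N then h.choose else fun _ => 0 with hchdef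
  have hch2 : ∀ x ∈ K, ‖x - p (ch x)‖ ≤ 3*R/N := by
    intro x hx
    have h := hch x hx
    simp only [hchdef, dif_pos h]
    exact h.choose_spec
  -- index type
  set r : ℕ := Fintype.card ((Fin 2 → Fin (N+1)) × (Σ k : Fin (s+1), (Fin (k:ℕ) → Fin 2)))
    with hrdef
  have hrC : (r:ℝ) ≤ C * ε ^ (-1/M) := by
    have hBe : (0:ℝ) ≤ B/ε := by positivity
    have hcard : r = (N+1)^2 * ∑ k : Fin (s+1), 2^(k:ℕ) := by
      rw [hrdef, Fintype.card_prod, Fintype.card_sigma]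
      simp [Fintype.card_fun]
    have hgeo : ∑ k : Fin (s+1), 2^(k:ℕ) ≤ 2^(s+1) := by
      rw [Fin.sum_univ_eq_sum_range (fun k => 2^k) (s+1)]
      have h2 : ∀ n : ℕ, ∑ k ∈ Finset.range n, 2^k ≤ 2^n := by
        intro n; induction n with
        | zero => simp
        | succ n ih => rw [Finset.sum_range_succ, pow_succ]; omega
      exact h2 (s+1)
    have hrnat : r ≤ 2^(s+3) * N^2 := by
      rw [hcard]
      calc (N+1)^2 * ∑ k : Fin (s+1), 2^(k:ℕ) ≤ (2*N)^2 * 2^(s+1) :=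
            Nat.mul_le_mul (Nat.pow_le_pow_left (by omega) 2) hgeo
        _ = 2^(s+3) * N^2 := by ring
    have hr1 : (r:ℝ) ≤ 2^(s+3) * (N:ℝ)^2 := by exact_mod_cast hrnat
    have hsq : (N:ℝ)^2 ≤ (y+1)^2 := pow_le_pow_left₀ hN0.le hNle 2
    have hN2 : (N:ℝ)^2 ≤ 2*(y^2+1) := by nlinarith [hsq, sq_nonneg (y-1)]
    have hy2 : y^2 ≤ (B/ε) ^ (1/M) + 1 := by
      have hy2eq : y^2 = (B/ε) ^ (2/((s:ℝ)+1)) := by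
        rw [hydef, ← Real.rpow_natCast ((B/ε) ^ (((s:ℝ)+1))⁻¹) 2, ← Real.rpow_mul hBe]
        congr 1
        push_cast
        field_simp
      have h0 : (0:ℝ) ≤ (B/ε)^(1/M) := Real.rpow_nonneg hBe _
      by_cases hb : 1 ≤ B/ε
      · have hle : (B/ε) ^ (2/((s:ℝ)+1)) ≤ (B/ε)^(1/M) := by
          apply Real.rpow_le_rpow_of_exponent_le hb
          rw [div_le_div_iff₀ (by positivity) hM]
          linarith
        rw [hy2eq]; linarith
      · push_neg at hb
        have hle : (B/ε) ^ (2/((s:ℝ)+1)) ≤ 1 :=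
          Real.rpow_le_one hBe hb.le (by positivity)
        rw [hy2eq]; linarith
    have hone : (1:ℝ) ≤ (A'/ε)^(1/M) := by
      have h1le : (1:ℝ) ≤ A'/ε := by
        rw [le_div_iff₀ hε]
        have : ε < A' := lt_of_lt_of_le hcase (le_max_right 1 A₀)
        linarith
      have := Real.rpow_le_rpow zero_le_one h1le (by positivity : (0:ℝ) ≤ 1/M)
      rwa [Real.one_rpow] at this
    have hfinal : (r:ℝ) ≤ 2^(s+4) * ((B/ε)^(1/M) + 2 * (A'/ε)^(1/M)) := by
      calc (r:ℝ) ≤ 2^(s+3) * (N:ℝ)^2 := hr1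
        _ ≤ 2^(s+3) * (2*(y^2+1)) := mul_le_mul_of_nonneg_left hN2 (by positivity)
        _ = 2^(s+4) * (y^2+1) := by ring
        _ ≤ 2^(s+4) * ((B/ε)^(1/M) + 2 * (A'/ε)^(1/M)) := by
            have hc : y^2 + 1 ≤ (B/ε)^(1/M) + 2 * (A'/ε)^(1/M) := by linarith
            exact mul_le_mul_of_nonneg_left hc (by positivity)
    have hsplit : ∀ X : ℝ, 0 ≤ X → (X/ε)^(1/M) = X^(1/M) * ε^(-1/M) := by
      intro X hX
      rw [Real.div_rpow hX hε.le, neg_div, Real.rpow_neg hε.le, div_eq_mul_inv]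
    calc (r:ℝ) ≤ 2^(s+4) * ((B/ε)^(1/M) + 2*(A'/ε)^(1/M)) := hfinal
      _ = C * ε^(-1/M) := by
          rw [hsplit B (by positivity), hsplit A' (by positivity), hCdef]; ring
  refine ⟨r, hrC, ?_⟩
  set cI : ((Fin 2 → Fin (N+1)) × (Σ k : Fin (s+1), (Fin (k:ℕ) → Fin 2))) → E2 → ℂ :=
    fun z x => if x ∈ K ∧ ch x = z.1 then
      ((((((z.2.1:ℕ)).factorial:ℝ))⁻¹ * ∏ i, (x - p z.1) (z.2.2 i) : ℝ) : ℂ) else 0 with hcIdef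
  set dI : ((Fin 2 → Fin (N+1)) × (Σ k : Fin (s+1), (Fin (k:ℕ) → Fin 2))) → E2 → ℂ :=
    fun z ξ => iteratedFDeriv ℝ (z.2.1:ℕ) (fun x' => a x' ξ) (p z.1)
      (fun i => EuclideanSpace.single (z.2.2 i) (1:ℝ)) with hdIdef
  set eqv := (Fintype.equivFin ((Fin 2 → Fin (N+1)) × (Σ k : Fin (s+1), (Fin (k:ℕ) → Fin 2)))).symm
    with heqvdef
  refine ⟨fun n => cI (eqv n), fun n => dI (eqv n), ?_⟩
  intro x ξ
  have hsumeq : ∑ n : Fin r, cI (eqv n) x * dI (eqv n) ξ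
      = ∑ z, cI z x * dI z ξ := Equiv.sum_comp eqv (fun z => cI z x * dI z ξ)
  rw [hsumeq]
  by_cases hx : x ∈ K
  · -- main estimate
    have hsum2 : ∑ z, cI z x * dI z ξ
        = ∑ km : (Σ k : Fin (s+1), (Fin (k:ℕ) → Fin 2)),
            (((((km.1:ℕ)).factorial:ℝ)⁻¹ * ∏ i, (x - p (ch x)) (km.2 i) : ℝ) : ℂ) *
              iteratedFDeriv ℝ (km.1:ℕ) (fun x' => a x' ξ) (p (ch x))
                (fun i => EuclideanSpace.single (km.2 i) (1:ℝ)) := by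
      rw [Fintype.sum_prod_type]
      rw [Finset.sum_eq_single (ch x)]
      · refine Finset.sum_congr rfl fun km _ => ?_
        simp only [hcIdef, hdIdef]
        rw [if_pos ⟨hx, trivial⟩]
      · intro σ _ hne
        apply Finset.sum_eq_zero
        intro km _
        simp only [hcIdef]
        rw [if_neg (fun h => hne h.2.symm), zero_mul]
      · intro h; exact absurd (Finset.mem_univ _) h
    rw [hsum2]
    have hsum3 : ∑ km : (Σ k : Fin (s+1), (Fin (k:ℕ) → Fin 2)),
            (((((km.1:ℕ)).factorial:ℝ)⁻¹ * ∏ i, (x - p (ch x)) (km.2 i) : ℝ) : ℂ) *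
              iteratedFDeriv ℝ (km.1:ℕ) (fun x' => a x' ξ) (p (ch x))
                (fun i => EuclideanSpace.single (km.2 i) (1:ℝ))
        = ∑ k ∈ Finset.range (s+1), ((k.factorial : ℝ)⁻¹) •
            iteratedFDeriv ℝ k (fun x' => a x' ξ) (p (ch x)) (fun _ => x - p (ch x)) := by
      rw [← Finset.univ_sigma_univ, Finset.sum_sigma, ← Fin.sum_univ_eq_sum_range]
      refine Finset.sum_congr rfl fun k _ => ?_
      rw [sep_expand (k:ℕ) (iteratedFDeriv ℝ (k:ℕ) (fun x' => a x' ξ) (p (ch x)))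
        (x - p (ch x)), Finset.smul_sum]
      refine Finset.sum_congr rfl fun m _ => ?_
      rw [smul_smul]
      rw [← Complex.real_smul]
    rw [hsum3]
    calc ‖a x ξ - ∑ k ∈ Finset.range (s+1), ((k.factorial : ℝ)⁻¹) •
            iteratedFDeriv ℝ k (fun x' => a x' ξ) (p (ch x)) (fun _ => x - p (ch x))‖
        ≤ D * ‖x - p (ch x)‖ ^ (s+1) :=
          sep_taylor (fun x' => a x' ξ) (hslice ξ) s D (fun y => hDer ξ y) (p (ch x)) x
      _ ≤ D * (3*R/N) ^ (s+1) := by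
          apply mul_le_mul_of_nonneg_left _ hDpos.le
          exact pow_le_pow_left₀ (norm_nonneg _) (hch2 x hx) _
      _ ≤ ε := by
          have h1 : D * (3*R/N) ^ (s+1) ≤ B / (N:ℝ)^(s+1) := by
            rw [div_pow, ← mul_div_assoc]
            gcongr
            · exact le_max_right 1 _
          exact h1.trans hmesh
  · -- outside the support
    have h0 : ∑ z, cI z x * dI z ξ = 0 := by
      apply Finset.sum_eq_zero
      intro z _
      simp only [hcIdef]
      rw [if_neg (fun h => hx h.1), zero_mul]
    rw [h0, hK0 x hx ξ, sub_zero, norm_zero]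
    exact hε.le
end
end

section
/- Let N > 0 and α > 0, and let φ : [0,1]² × ℝ → ℝ be such that φ(x,·) is three times continuously differentiable for each x, with C_k = 2π sup_{x ∈ [0,1]²} sup_θ |∂_θ^k φ(x,θ)| finite for k = 0,1,2,3; set D₂ = C₀ + C₂ and D₃ = C₁ + C₃, and assume D₂ > 0. If 0 < ε ≤ 1, N ≥ α⁶ D₃² / (18 ε²), and α is admissible in the sense that α ≤ √(√2/(e D₂)), then the ε-separation rank of the kernel e^{2πi Φ_ℓ(x,(r,θ))} on [0,1]² × W_N is at most 1 + log(4 ε⁻¹) / log( 2√2 / (e α² D₂) ). -/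
/-!
Put `F = φ(x,0) + ∂²_θφ(x,0)`. The residual `R(θ) = φ(θ) − cos θ φ(0) − sin θ φ'(0)` solves
`R + R'' = φ + φ''` with `R(0) = R'(0) = 0`, so Duhamel's formula
`R(θ) = ∫₀^θ sin(θ − s) (φ + φ'')(s) ds` gives `R(θ) = (1 − cos θ) F + O(D₃ |θ|³)`. On the wedge the
resulting phase error is at most `√2 α³ D₃ / (12 √N) ≤ ε/2`, so the kernel is `ε/2`-close to
`exp(2πi F · (1 − cos θ) r)`, whose exponent is a product of a function of `x` and a function of
`(r, θ)` of size at most `M = √2 α² D₂ / 4 ≤ 1`. Truncating the exponential series after `n` terms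
costs at most `2 Mⁿ`, and `M · 2√2 / (e α² D₂) = 1/e`, so `n = ⌈log(4/ε) / log(2√2 / (e α² D₂))⌉`
terms suffice.
-/

open Real intervalIntegral

/-- The paper's residual phase `Φ_ℓ(x, (r, θ))` is `r * residualPhase (φ x) θ`. -/
noncomputable def residualPhase (f : ℝ → ℝ) (θ : ℝ) : ℝ :=
  f θ - cos θ * f 0 - sin θ * deriv f 0

theorem ContDiff.hasDerivAt_iteratedDeriv {𝕜 F : Type*} [NontriviallyNormedField 𝕜]
    [NormedAddCommGroup F] [NormedSpace 𝕜 F] {f : 𝕜 → F} {n : WithTop ℕ∞} {k : ℕ}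
    (hf : ContDiff 𝕜 n f) (hk : k < n) (x : 𝕜) :
    HasDerivAt (iteratedDeriv k f) (iteratedDeriv (k + 1) f x) x := by
  rw [iteratedDeriv_succ]
  exact (hf.differentiable_iteratedDeriv k hk x).hasDerivAt

theorem integral_sin_sub_mul_eq_residualPhase_sub {f : ℝ → ℝ} (hf : ContDiff ℝ 2 f)
    (c θ : ℝ) :
    ∫ s in 0..θ, sin (θ - s) * (f s + iteratedDeriv 2 f s - c) =
      residualPhase f θ - (1 - cos θ) * c := by
  have hf₀ (t : ℝ) : HasDerivAt f (deriv f t) t :=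
    (hf.differentiable two_ne_zero t).hasDerivAt
  have hf₁ (t : ℝ) : HasDerivAt (deriv f) (iteratedDeriv 2 f t) t := by
    simpa only [iteratedDeriv_one] using hf.hasDerivAt_iteratedDeriv (k := 1) (by norm_num) t
  have hsin (t : ℝ) : HasDerivAt (fun u => sin (θ - u)) (-cos (θ - t)) t := by
    simpa using ((hasDerivAt_id t).const_sub θ).sin
  have hcos (t : ℝ) : HasDerivAt (fun u => cos (θ - u)) (sin (θ - t)) t := by
    simpa using ((hasDerivAt_id t).const_sub θ).cos
  rw [integral_eq_sub_of_hasDerivAt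
    (f := fun u => sin (θ - u) * deriv f u + cos (θ - u) * (f u - c))
    (fun t _ => (((hsin t).mul (hf₁ t)).add ((hcos t).mul ((hf₀ t).sub_const c))).congr_deriv
      (by ring))
    ((by fun_prop : Continuous _).intervalIntegrable _ _)]
  simp only [residualPhase, sub_self, sin_zero, cos_zero, sub_zero]
  ring

theorem abs_integral_sin_sub_mul_le {h : ℝ → ℝ} {L : ℝ} (hL : ∀ s, |h s| ≤ L * |s|) (θ : ℝ) :
    |∫ s in 0..θ, sin (θ - s) * h s| ≤ L * |θ| ^ 3 / 6 := by
  have hL₀ : 0 ≤ L := by simpa using (abs_nonneg _).trans (hL 1)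
  have hpt : ∀ s ∈ Set.uIoc 0 θ, ‖sin (θ - s) * h s‖ ≤ L * ((θ - s) * s) := by
    intro s hs
    have hprod : |θ - s| * |s| = (θ - s) * s := by
      rw [← abs_mul, abs_of_nonneg]
      rcases Set.mem_uIoc.mp hs with h | h <;> nlinarith [h.1, h.2]
    calc ‖sin (θ - s) * h s‖ = |sin (θ - s)| * |h s| := by rw [norm_mul, norm_eq_abs, norm_eq_abs]
      _ ≤ |θ - s| * (L * |s|) := mul_le_mul abs_sin_le_abs (hL s) (abs_nonneg _) (abs_nonneg _)
      _ = L * ((θ - s) * s) := by rw [← hprod]; ring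
  have hint : ∫ s in 0..θ, L * ((θ - s) * s) = L * θ ^ 3 / 6 := by
    simp only [integral_const_mul, sub_mul, ← sq]
    rw [integral_sub ((by fun_prop : Continuous _).intervalIntegrable _ _)
      ((by fun_prop : Continuous _).intervalIntegrable _ _), integral_const_mul]
    simp
    ring
  calc |∫ s in 0..θ, sin (θ - s) * h s| ≤ |∫ s in 0..θ, L * ((θ - s) * s)| :=
        norm_integral_le_abs_of_norm_le
          (MeasureTheory.ae_restrict_of_forall_mem measurableSet_uIoc hpt)
          ((by fun_prop : Continuous _).intervalIntegrable _ _)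
    _ = L * |θ| ^ 3 / 6 := by
      rw [hint, abs_div, abs_mul, abs_of_nonneg hL₀, abs_pow]; norm_num

theorem abs_residualPhase_sub_le {f : ℝ → ℝ} (hf : ContDiff ℝ 3 f) {L : ℝ}
    (hL : ∀ s, |deriv f s + iteratedDeriv 3 f s| ≤ L) (θ : ℝ) :
    |residualPhase f θ - (1 - cos θ) * (f 0 + iteratedDeriv 2 f 0)| ≤ L * |θ| ^ 3 / 6 := by
  set F := fun s => f s + iteratedDeriv 2 f s
  have hF (s : ℝ) : HasDerivAt F (deriv f s + iteratedDeriv 3 f s) s :=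
    (hf.differentiable three_ne_zero s).hasDerivAt.add
      (hf.hasDerivAt_iteratedDeriv (k := 2) (by norm_num) s)
  have hLip (s : ℝ) : |F s - F 0| ≤ L * |s| := by
    simpa using Convex.norm_image_sub_le_of_norm_deriv_le (fun t _ => (hF t).differentiableAt)
      (fun t _ => (hF t).deriv ▸ hL t) convex_univ (Set.mem_univ 0) (Set.mem_univ s)
  rw [← integral_sin_sub_mul_eq_residualPhase_sub (hf.of_le (by norm_num))]
  exact abs_integral_sin_sub_mul_le hLip θ

theorem norm_exp_sub_sum_range_le_two_mul {x : ℂ} (hx : ‖x‖ ≤ 1) {n : ℕ} (hn : 0 < n) :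
    ‖Complex.exp x - ∑ m ∈ Finset.range n, x ^ m / m.factorial‖ ≤ 2 * ‖x‖ ^ n := by
  have hn' : (1 : ℝ) ≤ n := by exact_mod_cast hn
  refine (Complex.exp_bound' ?_).trans ?_
  · rw [div_le_iff₀ (by positivity)]; push_cast; linarith
  · rw [mul_comm]
    gcongr
    exact div_le_self (by positivity) (by exact_mod_cast n.factorial_pos)

theorem norm_exp_mul_I_sub_exp_mul_I_le (s t : ℝ) :
    ‖Complex.exp (s * Complex.I) - Complex.exp (t * Complex.I)‖ ≤ |s - t| := by
  have h : Complex.exp (s * Complex.I) - Complex.exp (t * Complex.I) =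
      Complex.exp (t * Complex.I) * (Complex.exp (Complex.I * ↑(s - t)) - 1) := by
    rw [mul_sub, ← Complex.exp_add]; push_cast; ring_nf
  rw [h, norm_mul, Complex.norm_exp_ofReal_mul_I, one_mul]
  exact norm_exp_I_mul_ofReal_sub_one_le

theorem norm_exp_mul_I_sub_sum_le (z a b : ℝ) {r : ℕ} (hr : 0 < r) (hab : |a * b| ≤ 1) :
    ‖Complex.exp (z * Complex.I) -
        ∑ n : Fin r, ((a : ℂ) * Complex.I) ^ (n : ℕ) / (n : ℕ).factorial * (b : ℂ) ^ (n : ℕ)‖ ≤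
      |z - a * b| + 2 * |a * b| ^ r := by
  set x : ℂ := (a * b : ℝ) * Complex.I
  have hx : ‖x‖ = |a * b| := by simp [x]
  have hsum : ∑ n : Fin r, ((a : ℂ) * Complex.I) ^ (n : ℕ) / (n : ℕ).factorial * (b : ℂ) ^ (n : ℕ)
      = ∑ m ∈ Finset.range r, x ^ m / m.factorial := by
    rw [Fin.sum_univ_eq_sum_range (fun m => ((a : ℂ) * Complex.I) ^ m / m.factorial * (b : ℂ) ^ m)]
    refine Finset.sum_congr rfl fun m _ => ?_
    simp only [x]; push_cast; ring
  rw [hsum, ← hx]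
  exact (norm_sub_le_norm_sub_add_norm_sub _ (Complex.exp x) _).trans
    (add_le_add (norm_exp_mul_I_sub_exp_mul_I_le z (a * b))
      (norm_exp_sub_sum_range_le_two_mul (hx ▸ hab) hr))

theorem exists_pos_nat_le_one_add_log_div_log_and_pow_le {A M δ : ℝ} (hA : 1 < A) (hM : 0 ≤ M)
    (hMA : M * A ≤ 1) (hδ₀ : 0 < δ) (hδ₁ : δ < 1) :
    ∃ r : ℕ, 0 < r ∧ (r : ℝ) ≤ 1 + log δ⁻¹ / log A ∧ M ^ r ≤ δ := by
  have hq : 0 < log δ⁻¹ / log A :=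
    div_pos (log_pos ((one_lt_inv₀ hδ₀).mpr hδ₁)) (log_pos hA)
  refine ⟨⌈log δ⁻¹ / log A⌉₊, Nat.ceil_pos.mpr hq, by linarith [Nat.ceil_lt_add_one hq.le], ?_⟩
  set r := ⌈log δ⁻¹ / log A⌉₊
  have hAr : δ⁻¹ ≤ A ^ r := by
    rw [← log_le_log_iff (by positivity) (by positivity), log_pow,
      ← div_le_iff₀ (log_pos hA)]
    exact Nat.le_ceil _
  calc M ^ r ≤ A⁻¹ ^ r := by
        gcongr; rwa [← one_div, le_div_iff₀ (by linarith)]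
    _ ≤ δ := by rw [inv_pow]; exact inv_le_of_inv_le₀ hδ₀ hAr

theorem abs_two_pi_mul_residualPhase_sub_le {f : ℝ → ℝ} (hf : ContDiff ℝ 3 f) {C : ℕ → ℝ}
    (hC : ∀ k ≤ 3, ∀ s, 2 * π * |iteratedDeriv k f s| ≤ C k) {ρ : ℝ} (hρ : 0 ≤ ρ) (θ : ℝ) :
    |2 * π * (ρ * residualPhase f θ) - 2 * π * (f 0 + iteratedDeriv 2 f 0) * ((1 - cos θ) * ρ)|
      ≤ (C 1 + C 3) * (ρ * |θ| ^ 3) / 6 := by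
  have hL (s : ℝ) : |deriv f s + iteratedDeriv 3 f s| ≤ (C 1 + C 3) / (2 * π) := by
    rw [le_div_iff₀ (by positivity), ← iteratedDeriv_one]
    nlinarith [abs_add_le (iteratedDeriv 1 f s) (iteratedDeriv 3 f s), pi_pos,
      hC 1 (by norm_num) s, hC 3 le_rfl s]
  calc _ = 2 * π * ρ * |residualPhase f θ - (1 - cos θ) * (f 0 + iteratedDeriv 2 f 0)| := by
        rw [← abs_of_nonneg (by positivity : 0 ≤ 2 * π * ρ), ← abs_mul]; ring_nf
    _ ≤ 2 * π * ρ * ((C 1 + C 3) / (2 * π) * |θ| ^ 3 / 6) := by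
        gcongr; exact abs_residualPhase_sub_le hf hL θ
    _ = _ := by field_simp

theorem abs_two_pi_mul_add_iteratedDeriv_two_mul_le {f : ℝ → ℝ} {C : ℕ → ℝ}
    (hC : ∀ k ≤ 3, ∀ s, 2 * π * |iteratedDeriv k f s| ≤ C k) {t : ℝ} :
    |2 * π * (f 0 + iteratedDeriv 2 f 0) * t| ≤ (C 0 + C 2) * |t| := by
  rw [abs_mul, abs_mul, abs_of_pos two_pi_pos]
  gcongr
  have h₀ := hC 0 (by norm_num) 0
  rw [iteratedDeriv_zero] at h₀
  nlinarith [abs_add_le (f 0) (iteratedDeriv 2 f 0), pi_pos, hC 2 (by norm_num) 0]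

theorem one_sub_cos_mul_le_of_abs_le_div_sqrt {N α ρ θ : ℝ} (hN : 0 < N) (hρ : 0 ≤ ρ)
    (hρN : ρ ≤ √2 / 2 * N) (hθ : |θ| ≤ α / √N) : (1 - cos θ) * ρ ≤ √2 * α ^ 2 / 4 := by
  have hθ2 : θ ^ 2 ≤ α ^ 2 / N := by
    simpa [div_pow, sq_sqrt hN.le] using pow_le_pow_left₀ (abs_nonneg θ) hθ 2
  have hcos : 1 - cos θ ≤ θ ^ 2 / 2 := by linarith [one_sub_sq_div_two_le_cos (x := θ)]
  calc (1 - cos θ) * ρ ≤ α ^ 2 / N / 2 * (√2 / 2 * N) := by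
        gcongr
        linarith [cos_le_one θ]
    _ = √2 * α ^ 2 / 4 := by field_simp; ring

theorem mul_abs_pow_three_le_of_abs_le_div_sqrt {N α ρ θ : ℝ} (hN : 0 < N)
    (hρN : ρ ≤ √2 / 2 * N) (hθ : |θ| ≤ α / √N) : ρ * |θ| ^ 3 ≤ √2 * α ^ 3 / (2 * √N) := by
  have hsN : 0 < √N := sqrt_pos.mpr hN
  calc ρ * |θ| ^ 3 ≤ √2 / 2 * N * (α / √N) ^ 3 := by gcongr
    _ = √2 * α ^ 3 / (2 * √N) := by
        rw [div_pow, show √N ^ 3 = √N ^ 2 * √N by ring, sq_sqrt hN.le]; field_simp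

theorem mul_sqrt_two_mul_pow_three_div_le_half {N α ε D : ℝ} (hN : 0 < N) (hα : 0 ≤ α)
    (hε : 0 < ε) (hD : 0 ≤ D) (h : α ^ 6 * D ^ 2 / (18 * ε ^ 2) ≤ N) :
    D * (√2 * α ^ 3 / (2 * √N)) / 6 ≤ ε / 2 := by
  have hsN : 0 < √N := sqrt_pos.mpr hN
  have key : √2 * α ^ 3 * D ≤ 6 * ε * √N := by
    refine (pow_le_pow_iff_left₀ (by positivity) (by positivity) two_ne_zero).mp ?_
    have h' := (div_le_iff₀ (by positivity)).mp h
    calc (√2 * α ^ 3 * D) ^ 2 = 2 * (α ^ 6 * D ^ 2) := by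
          rw [mul_pow, mul_pow, sq_sqrt zero_le_two]; ring
      _ ≤ 36 * ε ^ 2 * N := by linarith
      _ = (6 * ε * √N) ^ 2 := by rw [mul_pow, sq_sqrt hN.le]; ring
  calc D * (√2 * α ^ 3 / (2 * √N)) / 6 = √2 * α ^ 3 * D / (12 * √N) := by ring
    _ ≤ 6 * ε * √N / (12 * √N) := by gcongr
    _ = ε / 2 := by field_simp; ring

theorem one_lt_two_mul_sqrt_two_div {α D : ℝ} (hα : 0 < α) (hD : 0 < D)
    (hadm : α ≤ √(√2 / (exp 1 * D))) : 1 < 2 * √2 / (exp 1 * α ^ 2 * D) := by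
  have hα2 : α ^ 2 * (exp 1 * D) ≤ √2 := by
    rw [← le_div_iff₀ (by positivity), ← le_sqrt hα.le (by positivity)]
    exact hadm
  rw [lt_div_iff₀ (by positivity)]
  nlinarith [sqrt_pos.mpr (two_pos : (0:ℝ) < 2)]

theorem mul_sqrt_two_mul_sq_div_four_mul_two_mul_sqrt_two_div {α D : ℝ} (hα : α ≠ 0) (hD : D ≠ 0) :
    D * (√2 * α ^ 2 / 4) * (2 * √2 / (exp 1 * α ^ 2 * D)) = (exp 1)⁻¹ := by
  field_simp
  rw [sq_sqrt zero_le_two]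
  ring

theorem stmt_6 (N α ε : ℝ) (hN : 0 < N) (hα : 0 < α) (hε0 : 0 < ε) (hε1 : ε ≤ 1)
    (φ : ℝ × ℝ → ℝ → ℝ) (C : ℕ → ℝ)
    (hsmooth : ∀ x ∈ Set.Icc (0:ℝ) 1 ×ˢ Set.Icc (0:ℝ) 1, ContDiff ℝ 3 (φ x))
    (hC : ∀ k ≤ 3, ∀ x ∈ Set.Icc (0:ℝ) 1 ×ˢ Set.Icc (0:ℝ) 1, ∀ θ : ℝ,
      2 * Real.pi * |iteratedDeriv k (φ x) θ| ≤ C k)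
    (hD2 : 0 < C 0 + C 2)
    (hNbig : α ^ 6 * (C 1 + C 3) ^ 2 / (18 * ε ^ 2) ≤ N)
    (hadm : α ≤ Real.sqrt (Real.sqrt 2 / (Real.exp 1 * (C 0 + C 2)))) :
    ∃ r : ℕ,
      (r : ℝ) ≤ 1 + Real.log (4 / ε) /
        Real.log (2 * Real.sqrt 2 / (Real.exp 1 * α ^ 2 * (C 0 + C 2))) ∧
      ∃ (c : Fin r → ℝ × ℝ → ℂ) (d : Fin r → ℝ × ℝ → ℂ),
        ∀ x ∈ Set.Icc (0:ℝ) 1 ×ˢ Set.Icc (0:ℝ) 1, ∀ p : ℝ × ℝ,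
          0 < p.1 → p.1 ≤ Real.sqrt 2 / 2 * N → |p.2| ≤ α / Real.sqrt N →
          ‖Complex.exp (2 * (Real.pi : ℂ) * Complex.I *
              ((p.1 * (φ x p.2 - Real.cos p.2 * φ x 0 - Real.sin p.2 * deriv (φ x) 0) : ℝ) : ℂ)) -
            ∑ n, c n x * d n p‖ ≤ ε := by
  set M := (C 0 + C 2) * (√2 * α ^ 2 / 4)
  set A := 2 * √2 / (exp 1 * α ^ 2 * (C 0 + C 2))
  have hA : 1 < A := one_lt_two_mul_sqrt_two_div hα hD2 hadm
  have hMA : M * A ≤ 1 :=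
    (mul_sqrt_two_mul_sq_div_four_mul_two_mul_sqrt_two_div hα.ne' hD2.ne').trans_le
      (inv_le_one_of_one_le₀ (one_le_exp zero_le_one))
  have hM1 : M ≤ 1 := (le_mul_of_one_le_right (by positivity) hA.le).trans hMA
  obtain ⟨r, hr, hr_le, hMr⟩ := exists_pos_nat_le_one_add_log_div_log_and_pow_le
    hA (by positivity) hMA (by positivity : 0 < ε / 4) (by linarith)
  rw [inv_div] at hr_le
  refine ⟨r, hr_le,
    fun n x => ((2 * π * (φ x 0 + iteratedDeriv 2 (φ x) 0) : ℝ) * Complex.I) ^ (n : ℕ)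
      / (n : ℕ).factorial,
    fun n p => (((1 - cos p.2) * p.1 : ℝ) : ℂ) ^ (n : ℕ), ?_⟩
  intro x hx p hp₁ hp₂ hp₃
  have hCx := fun k hk => hC k hk x hx
  have hD₃ : 0 ≤ C 1 + C 3 := add_nonneg
    ((mul_nonneg two_pi_pos.le (abs_nonneg _)).trans (hCx 1 (by norm_num) 0))
    ((mul_nonneg two_pi_pos.le (abs_nonneg _)).trans (hCx 3 le_rfl 0))
  have hphase := ((abs_two_pi_mul_residualPhase_sub_le (hsmooth x hx) hCx hp₁.le p.2).trans
    (div_le_div_of_nonneg_right (mul_le_mul_of_nonneg_left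
      (mul_abs_pow_three_le_of_abs_le_div_sqrt hN hp₂ hp₃) hD₃) (by norm_num))).trans
    (mul_sqrt_two_mul_pow_three_div_le_half hN hα.le hε0 hD₃ hNbig)
  have hamp := (abs_two_pi_mul_add_iteratedDeriv_two_mul_le hCx).trans <|
    mul_le_mul_of_nonneg_left
      ((abs_of_nonneg (mul_nonneg (by linarith [cos_le_one p.2]) hp₁.le)).trans_le
        (one_sub_cos_mul_le_of_abs_le_div_sqrt hN hp₁.le hp₂ hp₃)) hD2.le
  have hpow := (pow_le_pow_left₀ (abs_nonneg _) hamp r).trans hMr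
  refine le_trans (le_of_eq ?_) ((norm_exp_mul_I_sub_sum_le
    (2 * π * (p.1 * residualPhase (φ x) p.2)) _ _ hr (hamp.trans hM1)).trans (by linarith))
  congr 3
  push_cast [residualPhase]
  ring
end

section
/- Let N > 0, α > 0, Q > 0, R > 0, and let φ : [0,1]² × ℝ → ℝ be such that φ(x,·) is real-analytic for each x with 2π |∂_θ^k φ(x,θ)| ≤ Q · k! · R^{−k} for all k ≥ 0, x ∈ [0,1]², and |θ| ≤ α/√N; assume α ≤ R√N/2. Define f_k(x) = 2π ∂_θ^k φ(x,0), and g₀(r,θ) = r(1 − cos θ), g₁(r,θ) = r(θ − sin θ), g_k(r,θ) = r θ^k / k! for k ≥ 2. Then: (a) 2π Φ_ℓ(x,(r,θ)) = Σ_{k=0}^∞ f_k(x) g_k(r,θ) for all x ∈ [0,1]² and (r,θ) ∈ W_N; and (b) for every 0 < ε ≤ 1 and every integer K ≥ 2 with K ≥ log(2√2 Q N ε⁻¹) / log(R√N/α), one has |e^{2πi Φ_ℓ(x,(r,θ))} − exp( i Σ_{k=0}^{K−1} f_k(x) g_k(r,θ) )| ≤ ε/2 for all x ∈ [0,1]²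 and (r,θ) ∈ W_N. -/
/-!
For fixed `x`, the bound `2π |∂_θ^k φ(x, t)| ≤ Q k! R⁻ᵏ` on `|t| ≤ α / √N ≤ R / 2` makes the
Lagrange remainder of the Taylor expansion of `φ(x, ·)` at `0` geometrically small, so the Taylor
series converges on the wedge; absorbing `cos θ φ(x, 0) + sin θ ∂_θφ(x, 0)` into its terms
`k = 0, 1` gives (a). For `k ≥ 2` the `k`-th term of (a) is at most `Q r qᵏ` with
`q = α / (R √N) ≤ 1/2`, so the tail after `K` terms is at most `2 Q r q^K ≤ √2 Q N q^K`, and the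
hypothesis on `K` says exactly `q^K ≤ ε / (2 √2 Q N)`. As `t ↦ e^{it}` is `1`-Lipschitz, this
gives (b).
-/

open Filter Topology Finset
open scoped ContDiff

section

open Real
open scoped Nat

theorem abs_mul_pow_div_factorial_le {a B r θ : ℝ} {k : ℕ} (hr : 0 < r)
    (ha : |a| ≤ B * k ! / r ^ k) : |a * θ ^ k / k !| ≤ B * (|θ| / r) ^ k := by
  calc |a * θ ^ k / k !| = |a| * |θ| ^ k / k ! := by
        rw [abs_div, abs_mul, abs_pow, Nat.abs_cast]
    _ ≤ B * k ! / r ^ k * |θ| ^ k / k ! := by gcongr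
    _ = B * (|θ| / r) ^ k := by
        rw [div_pow]
        field_simp

theorem abs_sub_sum_taylor_le {f : ℝ → ℝ} (hf : ContDiff ℝ ∞ f) {B r θ : ℝ} {n : ℕ}
    (hr : 0 < r) (hb : ∀ t, |t| ≤ |θ| → |iteratedDeriv (n + 1) f t| ≤ B * (n + 1)! / r ^ (n + 1)) :
    |f θ - ∑ k ∈ range (n + 1), iteratedDeriv k f 0 * θ ^ k / k !| ≤ B * (|θ| / r) ^ (n + 1) := by
  rcases eq_or_ne θ 0 with rfl | hθ
  · simp [Finset.sum_range_succ']
  obtain ⟨t, ht, hrem⟩ := taylor_mean_remainder_lagrange_iteratedDeriv hθ.symm (n := n)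
    (hf.contDiffOn.of_le (mod_cast le_top))
  have hpoly : taylorWithinEval f n (Set.uIcc 0 θ) 0 θ =
      ∑ k ∈ range (n + 1), iteratedDeriv k f 0 * θ ^ k / k ! := by
    rw [taylor_within_apply]
    refine sum_congr rfl fun k _ => ?_
    rw [iteratedDerivWithin_eq_iteratedDeriv (uniqueDiffOn_uIcc hθ.symm)
      (hf.contDiffAt.of_le (mod_cast le_top)) Set.left_mem_uIcc, smul_eq_mul, sub_zero]
    ring
  have ht' : |t| ≤ |θ| := by
    simpa using Set.abs_sub_left_of_mem_uIcc (Set.uIoo_subset_uIcc_self ht)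
  rw [← hpoly, hrem, sub_zero]
  exact abs_mul_pow_div_factorial_le hr (hb t ht')

theorem hasSum_taylor_of_abs_iteratedDeriv_le {f : ℝ → ℝ} (hf : ContDiff ℝ ∞ f) {B r θ : ℝ}
    (hθ : |θ| < r) (hb : ∀ k t, |t| ≤ |θ| → |iteratedDeriv k f t| ≤ B * k ! / r ^ k) :
    HasSum (fun k => iteratedDeriv k f 0 * θ ^ k / k !) (f θ) := by
  have hr : 0 < r := (abs_nonneg θ).trans_lt hθ
  have hq : |θ| / r < 1 := (div_lt_one hr).2 hθ
  have hsummable : Summable fun k => ‖iteratedDeriv k f 0 * θ ^ k / (k ! : ℝ)‖ :=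
    ((summable_geometric_of_lt_one (by positivity) hq).mul_left B).of_nonneg_of_le
      (fun _ => norm_nonneg _) fun k => abs_mul_pow_div_factorial_le hr (hb k 0 (by simp))
  rw [hasSum_iff_tendsto_nat_of_summable_norm hsummable, ← tendsto_add_atTop_iff_nat 1,
    tendsto_iff_norm_sub_tendsto_zero]
  have hgeom : Tendsto (fun n : ℕ => B * (|θ| / r) ^ (n + 1)) atTop (𝓝 0) := by
    simpa using ((tendsto_pow_atTop_nhds_zero_of_lt_one (by positivity) hq).comp
      (tendsto_add_atTop_nat 1)).const_mul B
  refine squeeze_zero (fun _ => norm_nonneg _) (fun n => ?_) hgeom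
  rw [norm_sub_rev]
  exact abs_sub_sum_taylor_le hf hr (hb (n + 1))

/-- The functions `g_k(r, θ)` of the expansion of the residual phase. -/
noncomputable def residualProfile (k : ℕ) (r θ : ℝ) : ℝ :=
  if k = 0 then r * (1 - cos θ) else if k = 1 then r * (θ - sin θ) else r * θ ^ k / k !

theorem residualProfile_of_two_le {k : ℕ} (hk : 2 ≤ k) (r θ : ℝ) :
    residualProfile k r θ = r * (θ ^ k / k !) := by
  rw [residualProfile, if_neg (by omega), if_neg (by omega), mul_div_assoc]

theorem HasSum.mul_residualProfile {a : ℕ → ℝ} {s θ : ℝ}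
    (h : HasSum (fun k => a k * θ ^ k / k !) s) (r : ℝ) :
    HasSum (fun k => a k * residualProfile k r θ) (r * (s - cos θ * a 0 - sin θ * a 1)) := by
  have hcorr := ((h.mul_left r).sub (hasSum_ite_eq 0 (r * cos θ * a 0))).sub
    (hasSum_ite_eq 1 (r * sin θ * a 1))
  rw [show r * (s - cos θ * a 0 - sin θ * a 1) = r * s - r * cos θ * a 0 - r * sin θ * a 1 by ring]
  refine hcorr.congr_fun fun k => ?_
  rcases k with _ | _ | k
  · simp only [residualProfile, ↓reduceIte, pow_zero, mul_one, Nat.factorial_zero, Nat.cast_one,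
      div_one, zero_ne_one, sub_zero]
    ring
  · simp only [_root_.zero_add, residualProfile, one_ne_zero, ↓reduceIte, pow_one,
      Nat.factorial_one, Nat.cast_one, div_one, sub_zero]
    ring
  · rw [residualProfile_of_two_le (by omega)]
    simp only [if_neg (by omega : k + 2 ≠ 0), if_neg (by omega : k + 2 ≠ 1), sub_zero]
    ring

theorem abs_mul_residualProfile_le {a B R r θ : ℝ} {k : ℕ} (hk : 2 ≤ k) (hR : 0 < R) (hr : 0 ≤ r)
    (ha : |a| ≤ B * k ! / R ^ k) : |a * residualProfile k r θ| ≤ B * r * (|θ| / R) ^ k := by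
  calc |a * residualProfile k r θ| = r * |a * θ ^ k / k !| := by
        rw [residualProfile_of_two_le hk, mul_left_comm, abs_mul, abs_of_nonneg hr, mul_div_assoc]
    _ ≤ r * (B * (|θ| / R) ^ k) := by gcongr; exact abs_mul_pow_div_factorial_le hR ha
    _ = B * r * (|θ| / R) ^ k := by ring

theorem abs_sub_sum_range_le_of_abs_le_geometric {F : ℕ → ℝ} {s M q : ℝ} {K : ℕ}
    (hF : HasSum F s) (hq₀ : 0 ≤ q) (hq₁ : q < 1) (hb : ∀ k, K ≤ k → |F k| ≤ M * q ^ k) :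
    |s - ∑ k ∈ range K, F k| ≤ M * q ^ K / (1 - q) := by
  have htail : HasSum (fun n => F (n + K)) (s - ∑ k ∈ range K, F k) :=
    (hasSum_nat_add_iff' K).2 hF
  have hgeom : HasSum (fun n => M * q ^ (n + K)) (M * q ^ K / (1 - q)) := by
    rw [div_eq_mul_inv]
    exact ((hasSum_geometric_of_lt_one hq₀ hq₁).mul_left (M * q ^ K)).congr_fun fun n => by ring
  exact htail.norm_le_of_bounded hgeom fun n => hb (n + K) (by omega)

theorem pow_le_of_log_inv_div_log_inv_le {q y : ℝ} {K : ℕ} (hq₀ : 0 < q) (hq₁ : q < 1)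
    (hy : 0 < y) (hK : log y⁻¹ / log q⁻¹ ≤ K) : q ^ K ≤ y := by
  have hlog : 0 < log q⁻¹ := log_pos (one_lt_inv_iff₀.2 ⟨hq₀, hq₁⟩)
  rw [div_le_iff₀ hlog, log_inv, log_inv] at hK
  rw [← log_le_log_iff (by positivity) hy, log_pow]
  linarith

theorem hasSum_mul_residualProfile_of_mul_abs_iteratedDeriv_le {f : ℝ → ℝ} (hf : ContDiff ℝ ∞ f)
    {c Q R ρ θ : ℝ} (hc : 0 < c) (hρR : ρ < R) (hθ : |θ| ≤ ρ)
    (hb : ∀ k t, |t| ≤ ρ → c * |iteratedDeriv k f t| ≤ Q * k ! / R ^ k) (r : ℝ) :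
    HasSum (fun k => c * iteratedDeriv k f 0 * residualProfile k r θ)
      (c * (r * (f θ - cos θ * f 0 - sin θ * deriv f 0))) := by
  have hb' : ∀ k t, |t| ≤ |θ| → |iteratedDeriv k f t| ≤ Q / c * k ! / R ^ k := fun k t ht =>
    calc _ ≤ Q * k ! / R ^ k / c := (le_div_iff₀' hc).2 (hb k t (ht.trans hθ))
      _ = _ := by ring
  have htaylor := hasSum_taylor_of_abs_iteratedDeriv_le hf (hθ.trans_lt hρR) hb'
  simpa only [iteratedDeriv_zero, iteratedDeriv_one, mul_assoc] using
    (htaylor.mul_residualProfile r).mul_left c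

theorem abs_sub_sum_range_mul_residualProfile_le {a : ℕ → ℝ} {s Q R ρ L r θ ε : ℝ} {K : ℕ}
    (hs : HasSum (fun k => a k * residualProfile k r θ) s) (ha : ∀ k, |a k| ≤ Q * k ! / R ^ k)
    (hQ : 0 < Q) (hρ : 0 < ρ) (hρR : 2 * ρ ≤ R) (hθ : |θ| ≤ ρ) (hr : 0 < r) (hrL : r ≤ L)
    (hε : 0 < ε) (hK₂ : 2 ≤ K) (hK : log (4 * Q * L / ε) / log (R / ρ) ≤ K) :
    |s - ∑ k ∈ range K, a k * residualProfile k r θ| ≤ ε / 2 := by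
  have hR : 0 < R := by linarith
  have hL : 0 < L := hr.trans_le hrL
  set q := ρ / R with hq
  have hq₀ : 0 < q := by positivity
  have hq₁ : q ≤ 1 / 2 := by
    rw [hq, div_le_iff₀ hR]
    linarith
  have hqK : q ^ K ≤ ε / (4 * Q * L) :=
    pow_le_of_log_inv_div_log_inv_le hq₀ (by linarith) (by positivity) (by rwa [inv_div, inv_div])
  have htail : ∀ k, K ≤ k → |a k * residualProfile k r θ| ≤ Q * r * q ^ k := fun k hk =>
    (abs_mul_residualProfile_le (by omega) hR hr.le (ha k)).trans
      (by gcongr; exact div_le_div_of_nonneg_right hθ hR.le)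
  calc _ ≤ Q * r * q ^ K / (1 - q) :=
        abs_sub_sum_range_le_of_abs_le_geometric hs hq₀.le (by linarith) htail
    _ ≤ Q * L * (ε / (4 * Q * L)) / (1 / 2) := by
        gcongr
        linarith
    _ = ε / 2 := by
        field_simp
        ring

theorem Complex.norm_exp_I_mul_ofReal_sub_exp_I_mul_ofReal_le (a b : ℝ) :
    ‖Complex.exp (Complex.I * a) - Complex.exp (Complex.I * b)‖ ≤ |a - b| := by
  have hsplit : Complex.exp (Complex.I * a) - Complex.exp (Complex.I * b) =
      Complex.exp (Complex.I * b) * (Complex.exp (Complex.I * (a - b : ℝ)) - 1) := by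
    rw [mul_sub, mul_one, ← Complex.exp_add]
    push_cast
    ring_nf
  rw [hsplit, norm_mul, Complex.norm_exp_I_mul_ofReal, one_mul]
  exact Real.norm_exp_I_mul_ofReal_sub_one_le

end

theorem stmt_9_general (N α Q R : ℝ) (hN : 0 < N) (hα : 0 < α) (hQ : 0 < Q)
    (φ : ℝ × ℝ → ℝ → ℝ)
    (hsmooth : ∀ x ∈ Set.Icc (0:ℝ) 1 ×ˢ Set.Icc (0:ℝ) 1, ContDiff ℝ ⊤ (φ x))
    (hQR : ∀ k : ℕ, ∀ x ∈ Set.Icc (0:ℝ) 1 ×ˢ Set.Icc (0:ℝ) 1, ∀ θ : ℝ,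
      |θ| ≤ α / Real.sqrt N →
      2 * Real.pi * |iteratedDeriv k (φ x) θ| ≤ Q * (k.factorial : ℝ) / R ^ k)
    (hadm : α ≤ R * Real.sqrt N / 2) :
    (∀ x ∈ Set.Icc (0:ℝ) 1 ×ˢ Set.Icc (0:ℝ) 1, ∀ w : ℝ × ℝ,
      0 < w.1 → w.1 ≤ Real.sqrt 2 / 2 * N → |w.2| ≤ α / Real.sqrt N →
      HasSum (fun k : ℕ => (2 * Real.pi * iteratedDeriv k (φ x) 0) *
          (if k = 0 then w.1 * (1 - Real.cos w.2)
           else if k = 1 then w.1 * (w.2 - Real.sin w.2)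
           else w.1 * w.2 ^ k / (k.factorial : ℝ)))
        (2 * Real.pi *
          (w.1 * (φ x w.2 - Real.cos w.2 * φ x 0 - Real.sin w.2 * deriv (φ x) 0)))) ∧
    (∀ ε : ℝ, 0 < ε → ε ≤ 1 → ∀ K : ℕ, 2 ≤ K →
      Real.log (2 * Real.sqrt 2 * Q * N / ε) / Real.log (R * Real.sqrt N / α) ≤ (K : ℝ) →
      ∀ x ∈ Set.Icc (0:ℝ) 1 ×ˢ Set.Icc (0:ℝ) 1, ∀ w : ℝ × ℝ,
        0 < w.1 → w.1 ≤ Real.sqrt 2 / 2 * N → |w.2| ≤ α / Real.sqrt N →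
        ‖Complex.exp (2 * (Real.pi : ℂ) * Complex.I *
            ((w.1 * (φ x w.2 - Real.cos w.2 * φ x 0 -
              Real.sin w.2 * deriv (φ x) 0) : ℝ) : ℂ)) -
          Complex.exp (Complex.I *
            ((∑ k ∈ Finset.range K, (2 * Real.pi * iteratedDeriv k (φ x) 0) *
              (if k = 0 then w.1 * (1 - Real.cos w.2)
               else if k = 1 then w.1 * (w.2 - Real.sin w.2)
               else w.1 * w.2 ^ k / (k.factorial : ℝ)) : ℝ) : ℂ))‖ ≤ ε / 2) := by
  have hρ : 0 < α / Real.sqrt N := by positivity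
  have hρR : 2 * (α / Real.sqrt N) ≤ R := by
    rw [mul_div_assoc', div_le_iff₀ (Real.sqrt_pos.2 hN)]
    linarith
  have hexpand := fun (x : ℝ × ℝ) (hx : x ∈ Set.Icc (0:ℝ) 1 ×ˢ Set.Icc (0:ℝ) 1) (θ : ℝ)
      (hθ : |θ| ≤ α / Real.sqrt N) (r : ℝ) =>
    hasSum_mul_residualProfile_of_mul_abs_iteratedDeriv_le ((hsmooth x hx).of_le le_top)
      Real.two_pi_pos (by linarith) hθ (fun k t ht => hQR k x hx t ht) r
  refine ⟨fun x hx w _ _ hθ => hexpand x hx w.2 hθ w.1,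
    fun ε hε _ K hK hKlog x hx w hr hrN hθ => ?_⟩
  have hcoeff : ∀ k : ℕ, |2 * Real.pi * iteratedDeriv k (φ x) 0| ≤ Q * k.factorial / R ^ k := by
    intro k
    rw [abs_mul, abs_of_pos Real.two_pi_pos]
    exact hQR k x hx 0 (by simpa using hρ.le)
  have hphase : ∀ y : ℝ, 2 * (Real.pi : ℂ) * Complex.I * (y : ℂ) =
      Complex.I * ((2 * Real.pi * y : ℝ) : ℂ) := fun y => by
    push_cast
    ring
  rw [hphase]
  refine (Complex.norm_exp_I_mul_ofReal_sub_exp_I_mul_ofReal_le _ _).trans ?_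
  refine abs_sub_sum_range_mul_residualProfile_le (hexpand x hx w.2 hθ w.1) hcoeff hQ hρ hρR hθ
    hr hrN hε hK ?_
  rwa [show 4 * Q * (Real.sqrt 2 / 2 * N) = 2 * Real.sqrt 2 * Q * N by ring, div_div_eq_mul_div]

theorem stmt_9 (N α Q R : ℝ) (hN : 0 < N) (hα : 0 < α) (hQ : 0 < Q) (hR : 0 < R)
    (φ : ℝ × ℝ → ℝ → ℝ)
    (hsmooth : ∀ x ∈ Set.Icc (0:ℝ) 1 ×ˢ Set.Icc (0:ℝ) 1, ContDiff ℝ ⊤ (φ x))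
    (hQR : ∀ k : ℕ, ∀ x ∈ Set.Icc (0:ℝ) 1 ×ˢ Set.Icc (0:ℝ) 1, ∀ θ : ℝ,
      |θ| ≤ α / Real.sqrt N →
      2 * Real.pi * |iteratedDeriv k (φ x) θ| ≤ Q * (k.factorial : ℝ) / R ^ k)
    (hadm : α ≤ R * Real.sqrt N / 2) :
    (∀ x ∈ Set.Icc (0:ℝ) 1 ×ˢ Set.Icc (0:ℝ) 1, ∀ w : ℝ × ℝ,
      0 < w.1 → w.1 ≤ Real.sqrt 2 / 2 * N → |w.2| ≤ α / Real.sqrt N →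
      HasSum (fun k : ℕ => (2 * Real.pi * iteratedDeriv k (φ x) 0) *
          (if k = 0 then w.1 * (1 - Real.cos w.2)
           else if k = 1 then w.1 * (w.2 - Real.sin w.2)
           else w.1 * w.2 ^ k / (k.factorial : ℝ)))
        (2 * Real.pi *
          (w.1 * (φ x w.2 - Real.cos w.2 * φ x 0 - Real.sin w.2 * deriv (φ x) 0)))) ∧
    (∀ ε : ℝ, 0 < ε → ε ≤ 1 → ∀ K : ℕ, 2 ≤ K →
      Real.log (2 * Real.sqrt 2 * Q * N / ε) / Real.log (R * Real.sqrt N / α) ≤ (K : ℝ) →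
      ∀ x ∈ Set.Icc (0:ℝ) 1 ×ˢ Set.Icc (0:ℝ) 1, ∀ w : ℝ × ℝ,
        0 < w.1 → w.1 ≤ Real.sqrt 2 / 2 * N → |w.2| ≤ α / Real.sqrt N →
        ‖Complex.exp (2 * (Real.pi : ℂ) * Complex.I *
            ((w.1 * (φ x w.2 - Real.cos w.2 * φ x 0 -
              Real.sin w.2 * deriv (φ x) 0) : ℝ) : ℂ)) -
          Complex.exp (Complex.I *
            ((∑ k ∈ Finset.range K, (2 * Real.pi * iteratedDeriv k (φ x) 0) *
              (if k = 0 then w.1 * (1 - Real.cos w.2)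
               else if k = 1 then w.1 * (w.2 - Real.sin w.2)
               else w.1 * w.2 ^ k / (k.factorial : ℝ)) : ℝ) : ℂ))‖ ≤ ε / 2) :=
  stmt_9_general N α Q R hN hα hQ φ hsmooth hQR hadm
end

section
/- For all natural numbers A and B with B ≤ A, one has (2A)! · (B+1)! ≤ 4^A · (A+1)! · (A+B)!. -/
theorem stmt_12 (A B : ℕ) (h : B ≤ A) :
    (2 * A).factorial * (B + 1).factorial ≤ 4 ^ A * (A + 1).factorial * (A + B).factorial := by
  have hc : Nat.choose (2 * A) A ≤ 4 ^ A := by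
    calc Nat.choose (2 * A) A
        ≤ ∑ i ∈ Finset.range (2 * A + 1), Nat.choose (2 * A) i :=
          Finset.single_le_sum (fun i _ => Nat.zero_le _) (Finset.mem_range.2 (by omega))
      _ = 2 ^ (2 * A) := Nat.sum_range_choose _
      _ = 4 ^ A := by rw [pow_mul]; norm_num
  have hf : (2 * A).factorial = Nat.choose (2 * A) A * A.factorial * A.factorial := by
    have := Nat.choose_mul_factorial_mul_factorial (show A ≤ 2 * A by omega)
    have h2 : 2 * A - A = A := by omega
    rw [h2] at this
    exact this.symm
  have hab : A.factorial * B.factorial ≤ (A + B).factorial :=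
    Nat.le_of_dvd (Nat.factorial_pos _) (Nat.factorial_mul_factorial_dvd_factorial_add A B)
  calc (2 * A).factorial * (B + 1).factorial
      = Nat.choose (2 * A) A * (A.factorial * ((B + 1) * (A.factorial * B.factorial))) := by
        rw [hf, Nat.factorial_succ]; ring
    _ ≤ 4 ^ A * (A.factorial * ((A + 1) * (A + B).factorial)) := by
        gcongr
    _ = 4 ^ A * ((A + 1) * A.factorial) * (A + B).factorial := by ring
    _ = 4 ^ A * (A + 1).factorial * (A + B).factorial := by rw [Nat.factorial_succ]
end
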